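/- Let ν_r > 0, μ ∈ ℝ^d and Σ ∈ SPD(d) be fixed, set δ_i := (x_i − μ)ᵀ Σ^{-1} (x_i − μ) and b := Σ_{i=1}^n w_i [ (ν_r + d)/(ν_r + δ_i) − log((ν_r + d)/(ν_r + δ_i)) − 1 ]. Let ν^{aEM} be the unique zero of ν ↦ φ(ν/2) − φ((ν_r + d)/2) + b; let ν^{MMF} be the unique zero of ν ↦ φ(ν/2) − φ((ν+d)/2) + b; and let ν^{GMMF} be the limit of the inner iteration ν_{(0)} = ν_r, ν_{(l+1)} = zero of ν ↦ φ(ν/2) − φ((ν+d)/2) + Σ_{i=1}^n w_i [ (ν_{(l)} + d)/(ν_{(l)} + δ_i) − log((ν_{(l)} + d)/(ν_{(l)} + δ_i)) − 1 ], assuming this iteration converges. Then L(ν_r, μ, Σ) ≥ L(ν^{aEM}, μ, Σ) ≥ L(ν^{MMF}, μ, Σ) ≥ L(ν^{GMMF}, μ, Σ), and equality holds if and only if ∂L/∂ν (ν_r, μ, Σ) = 0, in which case ν_r = ν^{aEM} = ν^{MMF} = ν^{GMMF}. -/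

import Mathlib

open Real Matrix Filter Topology

/-- The digamma function `ψ(x) = d/dx log Γ(x)`. -/
noncomputable def digamma (x : ℝ) : ℝ := deriv (fun y => Real.log (Real.Gamma y)) x

/-- `φ(x) := ψ(x) - log x`. -/
noncomputable def phiFn (x : ℝ) : ℝ := digamma x - Real.log x

/-- The negative log-likelihood `L(ν, μ, Σ)` of the Student-t distribution:
`L = −2 log Γ((d+ν)/2) + 2 log Γ(ν/2) − ν log ν
  + (d+ν) Σᵢ wᵢ log(ν + (xᵢ−μ)ᵀ Σ⁻¹ (xᵢ−μ)) + log det Σ`. -/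
noncomputable def negLogLik3 (d n : ℕ) (x : Fin n → Fin d → ℝ) (w : Fin n → ℝ)
    (ν : ℝ) (μ : Fin d → ℝ) (S : Matrix (Fin d) (Fin d) ℝ) : ℝ :=
  -2 * Real.log (Real.Gamma ((d + ν) / 2)) + 2 * Real.log (Real.Gamma (ν / 2))
    - ν * Real.log ν
    + (d + ν) * ∑ i, w i * Real.log (ν + (x i - μ) ⬝ᵥ S⁻¹ *ᵥ (x i - μ))
    + Real.log S.det

open Set

/-!
Write `B(ν) = Σᵢ wᵢ (γᵢ(ν) − log γᵢ(ν) − 1)` (`dataTerm`) with `γᵢ(ν) = (ν + d)/(ν + δᵢ)`.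
Then `∂L/∂ν (ν) = φ(ν/2) − φ((ν + d)/2) + B(ν)`, where `B` is decreasing and, by the series
`φ(x) = −Σₙ g(x + n)` with `g(y) = 1/y − log(1 + 1/y)` (`phiStep`) positive, decreasing and
convex, `φ` is increasing and `x ↦ φ(x) − φ(x + c)` is increasing for `c ≥ 0`.

Each update `ν⁺` of `ν` solves `H(ν⁺, ν) = 0` for some `H` increasing in its first and decreasing
in its second argument with `H(v, v) = ∂L/∂ν (v)`; hence `∂L/∂ν` has a constant sign between `ν⁺`
and `ν`, so `L` is minimal at `ν⁺` on that interval. The aEM value lies between the MMF value and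
`ν_r`, and GMMF iterates MMF steps, which gives the chain of inequalities; if `∂L/∂ν (ν_r) ≠ 0` the
aEM step decreases `L` strictly.
-/

section Descent

variable {s : Set ℝ} {f : ℝ → ℝ} {H : ℝ → ℝ → ℝ} {a ρ : ℝ}

theorem isMinOn_uIcc_of_hasDerivAt_diag (hs : s.OrdConnected)
    (hf : ∀ v ∈ s, HasDerivAt f (H v v) v) (hH₁ : ∀ t ∈ s, MonotoneOn (H · t) s)
    (hH₂ : ∀ u ∈ s, AntitoneOn (H u) s) (ha : a ∈ s) (hρ : ρ ∈ s) (h0 : H a ρ = 0) :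
    IsMinOn f (uIcc a ρ) a := by
  have hsub := hs.uIcc_subset ha hρ
  have hcont : ContinuousOn f (uIcc a ρ) :=
    continuousOn_of_forall_continuousAt fun v hv => (hf v (hsub hv)).continuousAt
  have hderiv : ∀ v ∈ interior (uIcc a ρ), HasDerivWithinAt f (H v v) (interior (uIcc a ρ)) v :=
    fun v hv => (hf v (hsub (interior_subset hv))).hasDerivWithinAt
  intro y hy
  rcases le_total a ρ with haρ | hρa
  · rw [uIcc_of_le haρ] at hsub hcont hderiv hy
    refine monotoneOn_of_hasDerivWithinAt_nonneg (convex_Icc a ρ) hcont hderiv (fun v hv => ?_)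
      (left_mem_Icc.mpr haρ) hy hy.1
    have hvs := hsub (interior_subset hv)
    rw [interior_Icc] at hv
    calc 0 = H a ρ := h0.symm
      _ ≤ H a v := hH₂ a ha hvs hρ hv.2.le
      _ ≤ H v v := hH₁ v hvs ha hvs hv.1.le
  · rw [uIcc_of_ge hρa] at hsub hcont hderiv hy
    refine antitoneOn_of_hasDerivWithinAt_nonpos (convex_Icc ρ a) hcont hderiv (fun v hv => ?_)
      hy (right_mem_Icc.mpr hρa) hy.2
    have hvs := hsub (interior_subset hv)
    rw [interior_Icc] at hv
    calc H v v ≤ H a v := hH₁ v hvs hvs ha hv.2.le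
      _ ≤ H a ρ := hH₂ a ha hρ hvs hv.1.le
      _ = 0 := h0

theorem lt_of_hasDerivAt_diag (hs : s.OrdConnected)
    (hf : ∀ v ∈ s, HasDerivAt f (H v v) v) (hH₁ : ∀ t ∈ s, StrictMonoOn (H · t) s)
    (hH₂ : ∀ u ∈ s, AntitoneOn (H u) s) (ha : a ∈ s) (hρ : ρ ∈ s) (h0 : H a ρ = 0)
    (hρρ : H ρ ρ ≠ 0) : f a < f ρ := by
  rcases hρρ.lt_or_gt with hneg | hpos
  · have hρa : ρ < a := ((hH₁ ρ hρ).lt_iff_lt hρ ha).mp (h0 ▸ hneg)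
    have hsub := hs.out hρ ha
    refine strictAntiOn_of_hasDerivWithinAt_neg (convex_Icc ρ a)
      (continuousOn_of_forall_continuousAt fun v hv => (hf v (hsub hv)).continuousAt)
      (fun v hv => (hf v (hsub (interior_subset hv))).hasDerivWithinAt) (fun v hv => ?_)
      (left_mem_Icc.mpr hρa.le) (right_mem_Icc.mpr hρa.le) hρa
    have hvs := hsub (interior_subset hv)
    rw [interior_Icc] at hv
    calc H v v < H a v := hH₁ v hvs hvs ha hv.2
      _ ≤ H a ρ := hH₂ a ha hρ hvs hv.1.le
      _ = 0 := h0
  · have haρ : a < ρ := ((hH₁ ρ hρ).lt_iff_lt ha hρ).mp (h0 ▸ hpos)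
    have hsub := hs.out ha hρ
    refine strictMonoOn_of_hasDerivWithinAt_pos (convex_Icc a ρ)
      (continuousOn_of_forall_continuousAt fun v hv => (hf v (hsub hv)).continuousAt)
      (fun v hv => (hf v (hsub (interior_subset hv))).hasDerivWithinAt) (fun v hv => ?_)
      (left_mem_Icc.mpr haρ.le) (right_mem_Icc.mpr haρ.le) haρ
    have hvs := hsub (interior_subset hv)
    rw [interior_Icc] at hv
    calc 0 = H a ρ := h0.symm
      _ ≤ H a v := hH₂ a ha hvs hρ hv.2.le
      _ < H v v := hH₁ v hvs ha hvs hv.1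

theorem mem_uIcc_of_sub_eq_sub {P Q : ℝ → ℝ} {m : ℝ} (hP : StrictMonoOn P s)
    (hQ : MonotoneOn Q s) (hPQ : MonotoneOn (fun u => P u - Q u) s) (ha : a ∈ s) (hm : m ∈ s)
    (hρ : ρ ∈ s) (h : P a - P m = Q ρ - Q m) : a ∈ uIcc m ρ := by
  rcases le_total m ρ with hmρ | hρm
  · rw [uIcc_of_le hmρ]
    exact ⟨(hP.le_iff_le hm ha).mp (by linarith [hQ hm hρ hmρ]),
      (hP.le_iff_le ha hρ).mp (by linarith [hPQ hm hρ hmρ])⟩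
  · rw [uIcc_of_ge hρm]
    exact ⟨(hP.le_iff_le hρ ha).mp (by linarith [hPQ hρ hm hρm]),
      (hP.le_iff_le ha hm).mp (by linarith [hQ hρ hm hρm])⟩

end Descent

theorem hasSum_neg_of_telescoping {f g : ℝ → ℝ} {x : ℝ}
    (hstep : ∀ n : ℕ, f (x + n + 1) = f (x + n) + g (x + n)) (hg : ∀ n : ℕ, 0 ≤ g (x + n))
    (hf : Tendsto f atTop (𝓝 0)) : HasSum (fun n : ℕ => g (x + n)) (-f x) := by
  have hpartial : ∀ N : ℕ, ∑ n ∈ Finset.range N, g (x + n) = f (x + N) - f x := by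
    intro N
    have h := Finset.sum_range_sub (fun n : ℕ => f (x + n)) N
    simpa only [Nat.cast_succ, ← add_assoc, hstep, add_sub_cancel_left, Nat.cast_zero,
      add_zero] using h
  rw [hasSum_iff_tendsto_nat_of_nonneg hg]
  simp_rw [hpartial]
  simpa using (hf.comp (tendsto_atTop_add_const_left atTop x tendsto_natCast_atTop_atTop)).sub_const
    (f x)

theorem monotoneOn_comp_add_sub {f f' : ℝ → ℝ} {a c : ℝ} (hc : 0 ≤ c)
    (hf : ∀ y ∈ Ioi a, HasDerivAt f (f' y) y) (hf' : MonotoneOn f' (Ioi a)) :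
    MonotoneOn (fun y => f (y + c) - f y) (Ioi a) := by
  have hshift : ∀ y ∈ Ioi a, y + c ∈ Ioi a := fun y hy => lt_add_of_lt_of_nonneg hy hc
  have hderiv : ∀ y ∈ Ioi a, HasDerivAt (fun y => f (y + c) - f y) (f' (y + c) - f' y) y :=
    fun y hy => ((hf _ (hshift y hy)).comp_add_const y c).sub (hf y hy)
  refine monotoneOn_of_hasDerivWithinAt_nonneg (convex_Ioi a)
    (continuousOn_of_forall_continuousAt fun y hy => (hderiv y hy).continuousAt)
    (fun y hy => (hderiv y (interior_subset hy)).hasDerivWithinAt) fun y hy => ?_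
  rw [interior_Ioi] at hy
  exact sub_nonneg.mpr (hf' hy (hshift y hy) (le_add_of_nonneg_right hc))

theorem hasDerivAt_log_Gamma {x : ℝ} (hx : 0 < x) :
    HasDerivAt (fun y => log (Gamma y)) (digamma x) x :=
  ((differentiableAt_Gamma fun m => ((neg_nonpos.mpr m.cast_nonneg).trans_lt hx).ne').log
    (Gamma_pos_of_pos hx).ne').hasDerivAt

theorem log_Gamma_add_one_sub {x : ℝ} (hx : 0 < x) :
    log (Gamma (x + 1)) - log (Gamma x) = log x := by
  rw [Gamma_add_one hx.ne', log_mul hx.ne' (Gamma_pos_of_pos hx).ne', add_sub_cancel_right]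

theorem digamma_add_one {x : ℝ} (hx : 0 < x) : digamma (x + 1) = digamma x + x⁻¹ := by
  have hshift : (fun y => log (Gamma (y + 1))) =ᶠ[𝓝 x] fun y => log (Gamma y) + log y := by
    filter_upwards [eventually_gt_nhds hx] with y hy
    rw [← log_Gamma_add_one_sub hy, add_sub_cancel]
  have h := ((hasDerivAt_log_Gamma hx).add (hasDerivAt_log hx.ne')).congr_of_eventuallyEq hshift
  rw [digamma, ← deriv_comp_add_const, h.deriv]

theorem digamma_le_log {x : ℝ} (hx : 0 < x) : digamma x ≤ log x := by
  have h := convexOn_log_Gamma.le_slope_of_hasDerivAt hx (by simp; linarith : x + 1 ∈ Ioi 0)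
    (lt_add_one x) (hasDerivAt_log_Gamma hx)
  rwa [slope_def_field, add_sub_cancel_left, div_one, Function.comp_apply, Function.comp_apply,
    log_Gamma_add_one_sub hx] at h

theorem log_sub_one_le_digamma {x : ℝ} (hx : 1 < x) : log (x - 1) ≤ digamma x := by
  have hx₁ : 0 < x - 1 := sub_pos.mpr hx
  have h := convexOn_log_Gamma.slope_le_of_hasDerivAt hx₁ (by simp; linarith : x ∈ Ioi 0)
    (sub_one_lt x) (hasDerivAt_log_Gamma (by linarith))
  have hstep := log_Gamma_add_one_sub hx₁
  rw [sub_add_cancel] at hstep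
  rwa [slope_def_field, sub_sub_cancel, div_one, Function.comp_apply, Function.comp_apply,
    hstep] at h

theorem tendsto_phiFn_atTop : Tendsto phiFn atTop (𝓝 0) := by
  refine tendsto_of_tendsto_of_tendsto_of_le_of_le'
    (by simpa using tendsto_log_comp_add_sub_log (-1)) tendsto_const_nhds ?_ ?_
  · filter_upwards [eventually_gt_atTop 1] with x hx
    simpa [phiFn, ← sub_eq_add_neg] using log_sub_one_le_digamma hx
  · filter_upwards [eventually_gt_atTop 0] with x hx
    simpa [phiFn] using digamma_le_log hx

noncomputable def phiStep (y : ℝ) : ℝ := y⁻¹ - (log (y + 1) - log y)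

theorem phiFn_add_one {x : ℝ} (hx : 0 < x) : phiFn (x + 1) = phiFn x + phiStep x := by
  simp only [phiFn, phiStep, digamma_add_one hx]
  ring

theorem phiStep_pos {y : ℝ} (hy : 0 < y) : 0 < phiStep y := by
  have hlog := log_lt_sub_one_of_pos (by positivity : 0 < (y + 1) / y)
    (by rw [Ne, div_eq_one_iff_eq hy.ne']; linarith)
  rw [log_div (by linarith) hy.ne', add_div, div_self hy.ne', one_div] at hlog
  rw [phiStep]
  linarith

theorem hasDerivAt_phiStep {y : ℝ} (hy : 0 < y) :
    HasDerivAt phiStep (-(y ^ 2 * (y + 1))⁻¹) y := by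
  have h := (hasDerivAt_inv hy.ne').fun_sub
    ((((hasDerivAt_id' y).add_const 1).log (by linarith)).fun_sub (hasDerivAt_log hy.ne'))
  refine h.congr_deriv ?_
  field_simp
  ring

theorem strictAntiOn_phiStep : StrictAntiOn phiStep (Ioi 0) := by
  refine strictAntiOn_of_hasDerivWithinAt_neg (convex_Ioi 0)
    (continuousOn_of_forall_continuousAt fun y hy => (hasDerivAt_phiStep hy).continuousAt)
    (fun y hy => (hasDerivAt_phiStep (interior_subset hy)).hasDerivWithinAt) fun y hy => ?_
  rw [interior_Ioi] at hy
  have hy : (0 : ℝ) < y := hy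
  exact neg_neg_of_pos (by positivity)

theorem monotoneOn_phiStep_add_sub {c : ℝ} (hc : 0 ≤ c) :
    MonotoneOn (fun y => phiStep (y + c) - phiStep y) (Ioi 0) :=
  monotoneOn_comp_add_sub hc (fun _ hy => hasDerivAt_phiStep hy) fun a ha b hb hab => by
    have ha : (0 : ℝ) < a := ha
    exact neg_le_neg (inv_anti₀ (by positivity) (by gcongr))

theorem hasSum_phiStep {x : ℝ} (hx : 0 < x) :
    HasSum (fun n : ℕ => phiStep (x + n)) (-phiFn x) :=
  hasSum_neg_of_telescoping (fun _ => phiFn_add_one (by positivity))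
    (fun _ => (phiStep_pos (by positivity)).le) tendsto_phiFn_atTop

theorem strictMonoOn_phiFn : StrictMonoOn phiFn (Ioi 0) := fun x hx y hy hxy => by
  have hx : (0 : ℝ) < x := hx
  have hy : (0 : ℝ) < y := hy
  refine neg_lt_neg_iff.mp (hasSum_lt (i := 0) (fun n => ?_) ?_ (hasSum_phiStep (hx.trans hxy))
    (hasSum_phiStep hx))
  · exact strictAntiOn_phiStep.antitoneOn (by simp; positivity) (by simp; positivity)
      (by gcongr)
  · simpa using strictAntiOn_phiStep hx (hx.trans hxy) hxy

theorem monotoneOn_phiFn_sub_phiFn_add {c : ℝ} (hc : 0 ≤ c) :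
    MonotoneOn (fun x => phiFn x - phiFn (x + c)) (Ioi 0) := fun x hx y hy hxy => by
  have hx : (0 : ℝ) < x := hx
  have hy : (0 : ℝ) < y := hy
  have hsum : ∀ z, 0 < z → HasSum (fun n : ℕ => phiStep (z + c + n) - phiStep (z + n))
      (phiFn z - phiFn (z + c)) := fun z hz => by
    simpa only [neg_sub_neg] using
      (hasSum_phiStep (by positivity : 0 < z + c)).sub (hasSum_phiStep hz)
  refine hasSum_le (fun n => ?_) (hsum x hx) (hsum y hy)
  simpa only [add_right_comm _ c] using monotoneOn_phiStep_add_sub hc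
    (by simp; positivity : x + n ∈ Ioi 0) (by simp; positivity : y + n ∈ Ioi 0) (by gcongr)

theorem hasDerivAt_ratio_sub_log_ratio {c δ v : ℝ} (hc : 0 ≤ c) (hδ : 0 ≤ δ) (hv : 0 < v) :
    HasDerivAt (fun v => (v + c) / (v + δ) - log ((v + c) / (v + δ)) - 1)
      (-(δ - c) ^ 2 / ((v + δ) ^ 2 * (v + c))) v := by
  have hratio : HasDerivAt (fun v => (v + c) / (v + δ)) ((δ - c) / (v + δ) ^ 2) v := by
    refine (((hasDerivAt_id' v).add_const c).div ((hasDerivAt_id' v).add_const δ)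
      (by linarith)).congr_deriv ?_
    ring
  refine ((hratio.sub (hratio.log (by positivity))).sub_const 1).congr_deriv ?_
  field_simp
  ring

theorem antitoneOn_ratio_sub_log_ratio {c δ : ℝ} (hc : 0 ≤ c) (hδ : 0 ≤ δ) :
    AntitoneOn (fun v => (v + c) / (v + δ) - log ((v + c) / (v + δ)) - 1) (Ioi 0) := by
  refine antitoneOn_of_hasDerivWithinAt_nonpos (convex_Ioi 0)
    (continuousOn_of_forall_continuousAt fun v hv =>
      (hasDerivAt_ratio_sub_log_ratio hc hδ hv).continuousAt)
    (fun v hv => (hasDerivAt_ratio_sub_log_ratio hc hδ (interior_subset hv)).hasDerivWithinAt)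
    fun v hv => ?_
  rw [interior_Ioi] at hv
  have hv : (0 : ℝ) < v := hv
  exact div_nonpos_of_nonpos_of_nonneg (neg_nonpos.mpr (sq_nonneg _)) (by positivity)

noncomputable def dataTerm {n : ℕ} (d : ℕ) (w δ : Fin n → ℝ) (ν : ℝ) : ℝ :=
  ∑ i, w i * ((ν + d) / (ν + δ i) - log ((ν + d) / (ν + δ i)) - 1)

theorem antitoneOn_dataTerm {n : ℕ} (d : ℕ) {w δ : Fin n → ℝ} (hw : ∀ i, 0 ≤ w i)
    (hδ : ∀ i, 0 ≤ δ i) : AntitoneOn (dataTerm d w δ) (Ioi 0) := fun _ ha _ hb hab =>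
  Finset.sum_le_sum fun i _ => mul_le_mul_of_nonneg_left
    (antitoneOn_ratio_sub_log_ratio d.cast_nonneg (hδ i) ha hb hab) (hw i)

theorem hasDerivAt_negLogLik3 {d n : ℕ} {x : Fin n → Fin d → ℝ} {w δ : Fin n → ℝ}
    {μ : Fin d → ℝ} {S : Matrix (Fin d) (Fin d) ℝ}
    (hδ : ∀ i, δ i = (x i - μ) ⬝ᵥ S⁻¹ *ᵥ (x i - μ)) (hδ0 : ∀ i, 0 ≤ δ i)
    (hw1 : ∑ i, w i = 1) {ν : ℝ} (hν : 0 < ν) :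
    HasDerivAt (fun v => negLogLik3 d n x w v μ S)
      (phiFn (ν / 2) - phiFn ((ν + d) / 2) + dataTerm d w δ ν) ν := by
  have hνd : 0 < ν + d := by positivity
  have hνδ : ∀ i, 0 < ν + δ i := fun i => by linarith [hδ0 i]
  have hGamma (a : ℝ) (ha : 0 < (a + ν) / 2) :
      HasDerivAt (fun v => log (Gamma ((a + v) / 2))) (digamma ((a + ν) / 2) * (1 / 2)) ν := by
    have hlin : HasDerivAt (fun v : ℝ => (a + v) / 2) (1 / 2) ν :=
      ((hasDerivAt_id' ν).const_add a).div_const 2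
    exact (hasDerivAt_log_Gamma ha).comp ν hlin
  have hsum : HasDerivAt (fun v => ∑ i, w i * log (v + δ i)) (∑ i, w i * (ν + δ i)⁻¹) ν :=
    HasDerivAt.fun_sum fun i _ =>
      (((hasDerivAt_id' ν).add_const (δ i)).log (hνδ i).ne').const_mul (w i) |>.congr_deriv
        (by simp [div_eq_mul_inv])
  have h := ((((hGamma d (by positivity)).const_mul (-2)).fun_add
    ((hGamma 0 (by positivity)).const_mul 2)).fun_sub (hasDerivAt_mul_log hν.ne')).fun_add
    ((((hasDerivAt_id' ν).const_add (d : ℝ))).fun_mul hsum) |>.add_const (log S.det)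
  simp only [zero_add] at h
  have hL : (fun v => negLogLik3 d n x w v μ S) = fun v => -2 * log (Gamma ((d + v) / 2))
      + 2 * log (Gamma (v / 2)) - v * log v + (d + v) * ∑ i, w i * log (v + δ i) + log S.det := by
    simp only [negLogLik3, hδ]
  rw [hL]
  refine h.congr_deriv ?_
  have hdata : dataTerm d w δ ν = ∑ i, ((ν + d) * (w i * (ν + δ i)⁻¹) + w i * log (ν + δ i)
      - w i * log (ν + d) - w i) :=
    Finset.sum_congr rfl fun i _ => by rw [log_div hνd.ne' (hνδ i).ne']; ring
  rw [hdata, Finset.sum_sub_distrib, Finset.sum_sub_distrib, Finset.sum_add_distrib,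
    ← Finset.mul_sum, ← Finset.sum_mul, hw1, phiFn, phiFn, log_div hν.ne' two_ne_zero,
    log_div hνd.ne' two_ne_zero, add_comm (d : ℝ) ν]
  ring

theorem strictMonoOn_phiFn_half : StrictMonoOn (fun u => phiFn (u / 2)) (Ioi 0) :=
  strictMonoOn_phiFn.comp (fun _ _ _ _ h => by linarith)
    fun u (hu : 0 < u) => show 0 < u / 2 by positivity

theorem monotoneOn_phiFn_add_half {c : ℝ} (hc : 0 ≤ c) :
    MonotoneOn (fun u => phiFn ((u + c) / 2)) (Ioi 0) :=
  strictMonoOn_phiFn.monotoneOn.comp (fun _ _ _ _ h => by linarith)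
    fun u (hu : 0 < u) => show 0 < (u + c) / 2 by positivity

theorem monotoneOn_phiFn_half_sub {c : ℝ} (hc : 0 ≤ c) :
    MonotoneOn (fun u => phiFn (u / 2) - phiFn ((u + c) / 2)) (Ioi 0) := by
  simp_rw [add_div _ c 2]
  exact (monotoneOn_phiFn_sub_phiFn_add (by positivity)).comp (fun _ _ _ _ h => by linarith)
    fun u (hu : 0 < u) => show 0 < u / 2 by positivity

section StudentT

variable {d n : ℕ} {x : Fin n → Fin d → ℝ} {w δ : Fin n → ℝ} {μ : Fin d → ℝ}
  {S : Matrix (Fin d) (Fin d) ℝ} {a m ρ : ℝ}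

theorem negLogLik3_isMinOn_of_aEM (hδ : ∀ i, δ i = (x i - μ) ⬝ᵥ S⁻¹ *ᵥ (x i - μ))
    (hδ0 : ∀ i, 0 ≤ δ i) (hw : ∀ i, 0 ≤ w i) (hw1 : ∑ i, w i = 1) (ha : 0 < a) (hρ : 0 < ρ)
    (h : phiFn (a / 2) - phiFn ((ρ + d) / 2) + dataTerm d w δ ρ = 0) :
    IsMinOn (fun v => negLogLik3 d n x w v μ S) (uIcc a ρ) a :=
  isMinOn_uIcc_of_hasDerivAt_diag ordConnected_Ioi
    (H := fun u t => phiFn (u / 2) - phiFn ((t + d) / 2) + dataTerm d w δ t)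
    (fun _ hv => hasDerivAt_negLogLik3 hδ hδ0 hw1 hv)
    (fun _ _ _ hu _ hu' huu' => add_le_add_left
      (sub_le_sub_right (strictMonoOn_phiFn_half.monotoneOn hu hu' huu') _) _)
    (fun _ _ _ ht _ ht' htt' => add_le_add
      (sub_le_sub_left (monotoneOn_phiFn_add_half d.cast_nonneg ht ht' htt') _)
      (antitoneOn_dataTerm d hw hδ0 ht ht' htt'))
    ha hρ h

theorem negLogLik3_lt_of_aEM (hδ : ∀ i, δ i = (x i - μ) ⬝ᵥ S⁻¹ *ᵥ (x i - μ))
    (hδ0 : ∀ i, 0 ≤ δ i) (hw : ∀ i, 0 ≤ w i) (hw1 : ∑ i, w i = 1) (ha : 0 < a) (hρ : 0 < ρ)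
    (h : phiFn (a / 2) - phiFn ((ρ + d) / 2) + dataTerm d w δ ρ = 0)
    (hρρ : phiFn (ρ / 2) - phiFn ((ρ + d) / 2) + dataTerm d w δ ρ ≠ 0) :
    negLogLik3 d n x w a μ S < negLogLik3 d n x w ρ μ S :=
  lt_of_hasDerivAt_diag ordConnected_Ioi
    (H := fun u t => phiFn (u / 2) - phiFn ((t + d) / 2) + dataTerm d w δ t)
    (fun _ hv => hasDerivAt_negLogLik3 hδ hδ0 hw1 hv)
    (fun _ _ _ hu _ hu' huu' => add_lt_add_left
      (sub_lt_sub_right (strictMonoOn_phiFn_half hu hu' huu') _) _)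
    (fun _ _ _ ht _ ht' htt' => add_le_add
      (sub_le_sub_left (monotoneOn_phiFn_add_half d.cast_nonneg ht ht' htt') _)
      (antitoneOn_dataTerm d hw hδ0 ht ht' htt'))
    ha hρ h hρρ

theorem negLogLik3_isMinOn_of_MMF (hδ : ∀ i, δ i = (x i - μ) ⬝ᵥ S⁻¹ *ᵥ (x i - μ))
    (hδ0 : ∀ i, 0 ≤ δ i) (hw : ∀ i, 0 ≤ w i) (hw1 : ∑ i, w i = 1) (hm : 0 < m) (hρ : 0 < ρ)
    (h : phiFn (m / 2) - phiFn ((m + d) / 2) + dataTerm d w δ ρ = 0) :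
    IsMinOn (fun v => negLogLik3 d n x w v μ S) (uIcc m ρ) m :=
  isMinOn_uIcc_of_hasDerivAt_diag ordConnected_Ioi
    (H := fun u t => phiFn (u / 2) - phiFn ((u + d) / 2) + dataTerm d w δ t)
    (fun _ hv => hasDerivAt_negLogLik3 hδ hδ0 hw1 hv)
    (fun _ _ => (monotoneOn_phiFn_half_sub d.cast_nonneg).add_const _)
    (fun _ _ => (antitoneOn_dataTerm d hw hδ0).const_add _) hm hρ h

theorem negLogLik3_le_of_tendsto_MMF_iterate (hδ : ∀ i, δ i = (x i - μ) ⬝ᵥ S⁻¹ *ᵥ (x i - μ))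
    (hδ0 : ∀ i, 0 ≤ δ i) (hw : ∀ i, 0 ≤ w i) (hw1 : ∑ i, w i = 1) {g : ℕ → ℝ} {νg : ℝ}
    (hg : ∀ l, 0 < g l)
    (hstep : ∀ l, phiFn (g (l + 1) / 2) - phiFn ((g (l + 1) + d) / 2) + dataTerm d w δ (g l) = 0)
    (hνg : 0 < νg) (hconv : Tendsto g atTop (𝓝 νg)) (l : ℕ) :
    negLogLik3 d n x w νg μ S ≤ negLogLik3 d n x w (g l) μ S :=
  Antitone.le_of_tendsto (antitone_nat_of_succ_le fun l => isMinOn_iff.mp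
      (negLogLik3_isMinOn_of_MMF hδ hδ0 hw hw1 (hg _) (hg l) (hstep l)) _ right_mem_uIcc)
    ((hasDerivAt_negLogLik3 hδ hδ0 hw1 hνg).continuousAt.tendsto.comp hconv) l

end StudentT

theorem L_decreasing_nu_updates_general (d n : ℕ)
    (x : Fin n → Fin d → ℝ) (w : Fin n → ℝ)
    (hw : ∀ i, 0 < w i) (hw1 : ∑ i, w i = 1)
    (νr : ℝ) (hνr : 0 < νr) (μ : Fin d → ℝ)
    (S : Matrix (Fin d) (Fin d) ℝ) (hS : S.PosDef)
    (δ : Fin n → ℝ) (hδ : ∀ i, δ i = (x i - μ) ⬝ᵥ S⁻¹ *ᵥ (x i - μ))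
    (b : ℝ) (hb : b = ∑ i, w i * ((νr + d) / (νr + δ i)
      - Real.log ((νr + d) / (νr + δ i)) - 1))
    -- ν^aEM : the unique zero of ν ↦ φ(ν/2) − φ((ν_r+d)/2) + b
    (νa : ℝ) (hνa : 0 < νa)
    (hνaz : phiFn (νa / 2) - phiFn ((νr + d) / 2) + b = 0)
    (hνau : ∀ z > (0 : ℝ), phiFn (z / 2) - phiFn ((νr + d) / 2) + b = 0 → z = νa)
    -- ν^MMF : the unique zero of ν ↦ φ(ν/2) − φ((ν+d)/2) + b
    (νm : ℝ) (hνm : 0 < νm)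
    (hνmz : phiFn (νm / 2) - phiFn ((νm + d) / 2) + b = 0)
    (hνmu : ∀ z > (0 : ℝ), phiFn (z / 2) - phiFn ((z + d) / 2) + b = 0 → z = νm)
    -- ν^GMMF : the limit of the inner iteration ν₍₀₎ = ν_r,
    -- ν₍ₗ₊₁₎ = zero of ν ↦ φ(ν/2) − φ((ν+d)/2) + Σᵢ wᵢ [(ν₍ₗ₎+d)/(ν₍ₗ₎+δᵢ) − log(…) − 1]
    (g : ℕ → ℝ) (hg0 : g 0 = νr)
    (hgstep : ∀ l, 0 < g (l + 1) ∧
      phiFn (g (l + 1) / 2) - phiFn ((g (l + 1) + d) / 2)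
        + ∑ i, w i * ((g l + d) / (g l + δ i)
          - Real.log ((g l + d) / (g l + δ i)) - 1) = 0)
    (hgu : ∀ l, ∀ z > (0 : ℝ),
      phiFn (z / 2) - phiFn ((z + d) / 2)
        + ∑ i, w i * ((g l + d) / (g l + δ i)
          - Real.log ((g l + d) / (g l + δ i)) - 1) = 0 → z = g (l + 1))
    (νg : ℝ) (hνg : 0 < νg) (hgconv : Tendsto g atTop (nhds νg)) :
    negLogLik3 d n x w νa μ S ≤ negLogLik3 d n x w νr μ S ∧
    negLogLik3 d n x w νm μ S ≤ negLogLik3 d n x w νa μ S ∧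
    negLogLik3 d n x w νg μ S ≤ negLogLik3 d n x w νm μ S ∧
    (negLogLik3 d n x w νr μ S = negLogLik3 d n x w νg μ S ↔
      deriv (fun v => negLogLik3 d n x w v μ S) νr = 0) ∧
    (deriv (fun v => negLogLik3 d n x w v μ S) νr = 0 →
      νr = νa ∧ νa = νm ∧ νm = νg) := by
  have hδ0 : ∀ i, 0 ≤ δ i := fun i => by
    simpa [hδ i] using hS.inv.posSemidef.dotProduct_mulVec_nonneg (x i - μ)
  have hw0 : ∀ i, 0 ≤ w i := fun i => (hw i).le
  subst hb
  have hgpos : ∀ l, 0 < g l := fun l => l.casesOn (hg0 ▸ hνr) fun l => (hgstep l).1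
  have hg1 : g 1 = νm := hνmu _ (hgpos 1) (by simpa [hg0] using (hgstep 0).2)
  have hνa_mem : νa ∈ uIcc νm νr := mem_uIcc_of_sub_eq_sub strictMonoOn_phiFn_half
    (monotoneOn_phiFn_add_half d.cast_nonneg) (monotoneOn_phiFn_half_sub d.cast_nonneg) hνa hνm
    hνr (by linarith)
  have hderiv := (hasDerivAt_negLogLik3 hδ hδ0 hw1 hνr).deriv
  have hfixed : deriv (fun v => negLogLik3 d n x w v μ S) νr = 0 →
      νr = νa ∧ νa = νm ∧ νm = νg := fun h0 => by
    rw [hderiv] at h0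
    have hg : ∀ l, g l = νr := fun l =>
      l.rec hg0 fun l ih => (hgu l νr hνr (by rw [ih]; exact h0)).symm
    obtain rfl := hνau νr hνr h0
    obtain rfl := hνmu νr hνr h0
    exact ⟨rfl, rfl, tendsto_nhds_unique (tendsto_const_nhds.congr fun l => (hg l).symm) hgconv⟩
  have haEM := isMinOn_iff.mp
    (negLogLik3_isMinOn_of_aEM hδ hδ0 hw0 hw1 hνa hνr hνaz) νr
    right_mem_uIcc
  have hMMF := isMinOn_iff.mp
    (negLogLik3_isMinOn_of_MMF hδ hδ0 hw0 hw1 hνm hνr hνmz) νa hνa_mem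
  have hGMMF := hg1 ▸ negLogLik3_le_of_tendsto_MMF_iterate hδ hδ0 hw0
    hw1 hgpos (fun l => (hgstep l).2) hνg hgconv 1
  refine ⟨haEM, hMMF, hGMMF, ⟨fun heq => ?_, fun h0 => ?_⟩, hfixed⟩
  · by_contra hne
    linarith [negLogLik3_lt_of_aEM hδ hδ0 hw0 hw1 hνa hνr hνaz
      (hderiv ▸ hne)]
  · obtain ⟨rfl, rfl, rfl⟩ := hfixed h0
    rfl

/-- for fixed `ν_r > 0`, `μ`, `Σ ∈ SPD(d)`, with
`δᵢ = (xᵢ−μ)ᵀ Σ⁻¹ (xᵢ−μ)` and `b = Σᵢ wᵢ [(ν_r+d)/(ν_r+δᵢ) − log((ν_r+d)/(ν_r+δᵢ)) − 1]`,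
let `ν^aEM` be the unique zero of `ν ↦ φ(ν/2) − φ((ν_r+d)/2) + b`, `ν^MMF` the unique zero
of `ν ↦ φ(ν/2) − φ((ν+d)/2) + b`, and `ν^GMMF` the limit of the (convergent) inner GMMF
iteration started at `ν_r`. Then
`L(ν_r,μ,Σ) ≥ L(ν^aEM,μ,Σ) ≥ L(ν^MMF,μ,Σ) ≥ L(ν^GMMF,μ,Σ)`, with equality iff
`∂L/∂ν(ν_r,μ,Σ) = 0`, in which case `ν_r = ν^aEM = ν^MMF = ν^GMMF`. -/
theorem L_decreasing_nu_updates (d n : ℕ) (hd : 1 ≤ d)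
    (x : Fin n → Fin d → ℝ) (w : Fin n → ℝ)
    (hw : ∀ i, 0 < w i) (hw1 : ∑ i, w i = 1)
    (νr : ℝ) (hνr : 0 < νr) (μ : Fin d → ℝ)
    (S : Matrix (Fin d) (Fin d) ℝ) (hS : S.PosDef)
    (δ : Fin n → ℝ) (hδ : ∀ i, δ i = (x i - μ) ⬝ᵥ S⁻¹ *ᵥ (x i - μ))
    (b : ℝ) (hb : b = ∑ i, w i * ((νr + d) / (νr + δ i)
      - Real.log ((νr + d) / (νr + δ i)) - 1))
    -- ν^aEM : the unique zero of ν ↦ φ(ν/2) − φ((ν_r+d)/2) + b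
    (νa : ℝ) (hνa : 0 < νa)
    (hνaz : phiFn (νa / 2) - phiFn ((νr + d) / 2) + b = 0)
    (hνau : ∀ z > (0 : ℝ), phiFn (z / 2) - phiFn ((νr + d) / 2) + b = 0 → z = νa)
    -- ν^MMF : the unique zero of ν ↦ φ(ν/2) − φ((ν+d)/2) + b
    (νm : ℝ) (hνm : 0 < νm)
    (hνmz : phiFn (νm / 2) - phiFn ((νm + d) / 2) + b = 0)
    (hνmu : ∀ z > (0 : ℝ), phiFn (z / 2) - phiFn ((z + d) / 2) + b = 0 → z = νm)
    -- ν^GMMF : the limit of the inner iteration ν₍₀₎ = ν_r,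
    -- ν₍ₗ₊₁₎ = zero of ν ↦ φ(ν/2) − φ((ν+d)/2) + Σᵢ wᵢ [(ν₍ₗ₎+d)/(ν₍ₗ₎+δᵢ) − log(…) − 1]
    (g : ℕ → ℝ) (hg0 : g 0 = νr)
    (hgstep : ∀ l, 0 < g (l + 1) ∧
      phiFn (g (l + 1) / 2) - phiFn ((g (l + 1) + d) / 2)
        + ∑ i, w i * ((g l + d) / (g l + δ i)
          - Real.log ((g l + d) / (g l + δ i)) - 1) = 0)
    (hgu : ∀ l, ∀ z > (0 : ℝ),
      phiFn (z / 2) - phiFn ((z + d) / 2)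
        + ∑ i, w i * ((g l + d) / (g l + δ i)
          - Real.log ((g l + d) / (g l + δ i)) - 1) = 0 → z = g (l + 1))
    (νg : ℝ) (hνg : 0 < νg) (hgconv : Tendsto g atTop (nhds νg)) :
    negLogLik3 d n x w νa μ S ≤ negLogLik3 d n x w νr μ S ∧
    negLogLik3 d n x w νm μ S ≤ negLogLik3 d n x w νa μ S ∧
    negLogLik3 d n x w νg μ S ≤ negLogLik3 d n x w νm μ S ∧
    (negLogLik3 d n x w νr μ S = negLogLik3 d n x w νg μ S ↔
      deriv (fun v => negLogLik3 d n x w v μ S) νr = 0) ∧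
    (deriv (fun v => negLogLik3 d n x w v μ S) νr = 0 →
      νr = νa ∧ νa = νm ∧ νm = νg) :=
  L_decreasing_nu_updates_general d n x w hw hw1 νr hνr μ S hS δ hδ b hb νa hνa hνaz hνau νm hνm
    hνmz hνmu g hg0 hgstep hgu νg hνg hgconv
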